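/- For a delta-matroid D = (V, F), X ⊆ V, and ℓ ∈ ℕ, the ℓ-projection D|_ℓ X = (V \ X, {F \ X : F ∈ F, |F ∩ X| = ℓ}) is a delta-matroid, provided the resulting feasible family is nonempty. -/
import Mathlib


open scoped symmDiff

variable {α : Type*} [DecidableEq α]

/-- A (finite) delta-matroid given by its family of feasible sets:
a nonempty family satisfying the symmetric exchange axiom. -/
def IsDeltaMatroid (𝓕 : Set (Finset α)) : Prop :=
  𝓕.Nonempty ∧
    ∀ A ∈ 𝓕, ∀ B ∈ 𝓕, ∀ x ∈ A ∆ B, ∃ y ∈ A ∆ B, A ∆ ({x, y} : Finset α) ∈ 𝓕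

/-- The exchange property alone. -/
def DMExch (𝓕 : Set (Finset α)) : Prop :=
  ∀ A ∈ 𝓕, ∀ B ∈ 𝓕, ∀ x ∈ A ∆ B, ∃ y ∈ A ∆ B, A ∆ ({x, y} : Finset α) ∈ 𝓕

lemma pair_sd_pair {x t w : α} (hxt : x ≠ t) (hwt : w ≠ t) (hxw : x ≠ w) :
    ({x, t} : Finset α) ∆ {t, w} = {x, w} := by
  ext a
  by_cases h1 : a = x <;> by_cases h2 : a = t <;> by_cases h3 : a = w <;>
    simp_all [Finset.mem_symmDiff]

lemma pair_sd_single {x t : α} (hxt : x ≠ t) :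
    ({x, t} : Finset α) ∆ {t} = {x} := by
  ext a
  by_cases h1 : a = x <;> by_cases h2 : a = t <;> simp_all [Finset.mem_symmDiff]

/-- Alternating-path lemma for the delta-sum of two exchange families. -/
lemma aux_walk : ∀ (n : ℕ) (𝓕₁ 𝓕₂ : Set (Finset α)), DMExch 𝓕₁ → DMExch 𝓕₂ →
    ∀ (A B₁ B₂ P₁ P₂ : Finset α) (x t : α),
    B₁ ∈ 𝓕₁ → B₂ ∈ 𝓕₂ → P₁ ∈ 𝓕₁ → P₂ ∈ 𝓕₂ →
    (P₁ ∆ B₁).card + (P₂ ∆ B₂).card ≤ n →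
    P₁ ∆ P₂ = A ∆ {x, t} → t ∈ P₂ ∆ B₂ → x ∉ P₁ ∆ B₁ → x ∉ P₂ ∆ B₂ → t ≠ x →
    ∃ y ∈ A ∆ (B₁ ∆ B₂), ∃ F₁ ∈ 𝓕₁, ∃ F₂ ∈ 𝓕₂,
      A ∆ ({x, y} : Finset α) = F₁ ∆ F₂ := by
  intro n
  induction n using Nat.strong_induction_on with
  | _ n ih =>
  intro 𝓕₁ 𝓕₂ h₁ h₂ A B₁ B₂ P₁ P₂ x t hB₁ hB₂ hP₁ hP₂ hcard hPP ht hx₁ hx₂ htx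
  obtain ⟨w, hw, hQ⟩ := h₂ P₂ hP₂ B₂ hB₂ t ht
  have hxt : x ≠ t := htx.symm
  have hxw : x ≠ w := fun h => hx₂ (h ▸ hw)
  have key : (P₁ ∆ B₁) ∆ (P₂ ∆ B₂) = A ∆ (B₁ ∆ B₂) ∆ ({x, t} : Finset α) := by
    rw [symmDiff_symmDiff_symmDiff_comm, hPP, symmDiff_right_comm]
  have hxbig : x ∉ (P₁ ∆ B₁) ∆ (P₂ ∆ B₂) := by
    simp [Finset.mem_symmDiff, hx₁, hx₂]
  rw [key] at hxbig
  by_cases hwt : w = t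
  · -- y = x works
    subst hwt
    refine ⟨x, ?_, P₁, hP₁, P₂ ∆ {w, w}, hQ, ?_⟩
    · by_contra hc
      exact hxbig (Finset.mem_symmDiff.mpr (Or.inr ⟨by simp, hc⟩))
    · rw [Finset.pair_eq_singleton, Finset.pair_eq_singleton, ← symmDiff_assoc, hPP,
        symmDiff_assoc, pair_sd_single hxt]
  · by_cases hw₁ : w ∈ P₁ ∆ B₁
    · -- recurse with roles swapped
      have htw : t ≠ w := fun h => hwt h.symm
      have hsub : ({t, w} : Finset α) ⊆ P₂ ∆ B₂ := by
        intro a ha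
        rcases Finset.mem_insert.mp ha with rfl | ha
        · exact ht
        · rwa [Finset.mem_singleton.mp ha]
      have hQB : (P₂ ∆ {t, w}) ∆ B₂ = (P₂ ∆ B₂) \ {t, w} := by
        rw [symmDiff_right_comm, symmDiff_of_ge hsub]
      have hcard2 : ({t, w} : Finset α).card = 2 := Finset.card_pair htw
      have hle : 2 ≤ (P₂ ∆ B₂).card := by
        calc 2 = ({t, w} : Finset α).card := hcard2.symm
        _ ≤ (P₂ ∆ B₂).card := Finset.card_le_card hsub
      have hcardQ : ((P₂ ∆ {t, w}) ∆ B₂).card = (P₂ ∆ B₂).card - 2 := by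
        rw [hQB, Finset.card_sdiff_of_subset hsub, hcard2]
      have hQP : (P₂ ∆ {t, w}) ∆ P₁ = A ∆ {x, w} := by
        rw [symmDiff_comm, ← symmDiff_assoc, hPP, symmDiff_assoc,
          pair_sd_pair hxt hwt hxw]
      have hxQ : x ∉ (P₂ ∆ {t, w}) ∆ B₂ := by
        rw [hQB]
        intro hc
        exact hx₂ (Finset.mem_sdiff.mp hc).1
      have hn : 1 ≤ n := le_trans (by omega) hcard
      obtain ⟨y, hy, F₂, hF₂, F₁, hF₁, heq⟩ :=
        ih (n - 1) (by omega) 𝓕₂ 𝓕₁ h₂ h₁ A B₂ B₁ (P₂ ∆ {t, w}) P₁ x w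
          hB₂ hB₁ hQ hP₁ (by omega) hQP hw₁ hxQ hx₁ hxw.symm
      exact ⟨y, by rwa [symmDiff_comm B₂ B₁] at hy, F₁, hF₁, F₂, hF₂,
        heq.trans (symmDiff_comm _ _)⟩
    · -- y = w works
      have hwmem : w ∈ (P₁ ∆ B₁) ∆ (P₂ ∆ B₂) :=
        Finset.mem_symmDiff.mpr (Or.inr ⟨hw, hw₁⟩)
      rw [key] at hwmem
      have hwxt : w ∉ ({x, t} : Finset α) := by
        simp only [Finset.mem_insert, Finset.mem_singleton]
        push_neg
        exact ⟨fun h => hxw h.symm, hwt⟩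
      have hwA : w ∈ A ∆ (B₁ ∆ B₂) := by
        rcases Finset.mem_symmDiff.mp hwmem with ⟨h1, _⟩ | ⟨h1, _⟩
        · exact h1
        · exact absurd h1 hwxt
      refine ⟨w, hwA, P₁, hP₁, P₂ ∆ {t, w}, hQ, ?_⟩
      rw [← symmDiff_assoc, hPP, symmDiff_assoc, pair_sd_pair hxt hwt hxw]

lemma sum_main (𝓕₁ 𝓕₂ : Set (Finset α)) (h₁ : DMExch 𝓕₁) (h₂ : DMExch 𝓕₂)
    (A₁ A₂ B₁ B₂ : Finset α) (x : α)
    (hA₁ : A₁ ∈ 𝓕₁) (hA₂ : A₂ ∈ 𝓕₂) (hB₁ : B₁ ∈ 𝓕₁) (hB₂ : B₂ ∈ 𝓕₂)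
    (hx1 : x ∈ A₁ ∆ B₁) (hx2 : x ∉ A₂ ∆ B₂) :
    ∃ y ∈ (A₁ ∆ A₂) ∆ (B₁ ∆ B₂), ∃ F₁ ∈ 𝓕₁, ∃ F₂ ∈ 𝓕₂,
      (A₁ ∆ A₂) ∆ ({x, y} : Finset α) = F₁ ∆ F₂ := by
  obtain ⟨y, hy, hC⟩ := h₁ A₁ hA₁ B₁ hB₁ x hx1
  have key : (A₁ ∆ B₁) ∆ (A₂ ∆ B₂) = (A₁ ∆ A₂) ∆ (B₁ ∆ B₂) :=
    symmDiff_symmDiff_symmDiff_comm A₁ B₁ A₂ B₂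
  by_cases hy2 : y ∈ A₂ ∆ B₂
  · have hyx : y ≠ x := fun h => hx2 (h ▸ hy2)
    have hPP : (A₁ ∆ {x, y}) ∆ A₂ = (A₁ ∆ A₂) ∆ {x, y} := symmDiff_right_comm A₁ _ _
    have hx₁' : x ∉ (A₁ ∆ {x, y}) ∆ B₁ := by
      rw [symmDiff_right_comm]
      simp [Finset.mem_symmDiff, hx1]
    exact aux_walk ((A₁ ∆ {x, y} ∆ B₁).card + (A₂ ∆ B₂).card) 𝓕₁ 𝓕₂ h₁ h₂
      (A₁ ∆ A₂) B₁ B₂ (A₁ ∆ {x, y}) A₂ x y hB₁ hB₂ hC hA₂ le_rfl hPP hy2 hx₁' hx2 hyx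
  · refine ⟨y, ?_, A₁ ∆ {x, y}, hC, A₂, hA₂, ?_⟩
    · rw [← key]
      exact Finset.mem_symmDiff.mpr (Or.inl ⟨hy, hy2⟩)
    · rw [symmDiff_right_comm]

lemma sum_exchange (𝓕₁ 𝓕₂ : Set (Finset α)) (h₁ : DMExch 𝓕₁) (h₂ : DMExch 𝓕₂)
    (A₁ A₂ B₁ B₂ : Finset α) (x : α)
    (hA₁ : A₁ ∈ 𝓕₁) (hA₂ : A₂ ∈ 𝓕₂) (hB₁ : B₁ ∈ 𝓕₁) (hB₂ : B₂ ∈ 𝓕₂)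
    (hx : x ∈ (A₁ ∆ A₂) ∆ (B₁ ∆ B₂)) :
    ∃ y ∈ (A₁ ∆ A₂) ∆ (B₁ ∆ B₂), ∃ F₁ ∈ 𝓕₁, ∃ F₂ ∈ 𝓕₂,
      (A₁ ∆ A₂) ∆ ({x, y} : Finset α) = F₁ ∆ F₂ := by
  have key : (A₁ ∆ B₁) ∆ (A₂ ∆ B₂) = (A₁ ∆ A₂) ∆ (B₁ ∆ B₂) :=
    symmDiff_symmDiff_symmDiff_comm A₁ B₁ A₂ B₂
  rw [← key] at hx
  rcases Finset.mem_symmDiff.mp hx with ⟨h1, h2⟩ | ⟨h1, h2⟩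
  · exact sum_main 𝓕₁ 𝓕₂ h₁ h₂ A₁ A₂ B₁ B₂ x hA₁ hA₂ hB₁ hB₂ h1 h2
  · obtain ⟨y, hy, F₂, hF₂, F₁, hF₁, heq⟩ :=
      sum_main 𝓕₂ 𝓕₁ h₂ h₁ A₂ A₁ B₂ B₁ x hA₂ hA₁ hB₂ hB₁ h1 h2
    rw [symmDiff_comm A₂ A₁, symmDiff_comm B₂ B₁] at hy
    rw [symmDiff_comm A₂ A₁] at heq
    exact ⟨y, hy, F₁, hF₁, F₂, hF₂, heq.trans (symmDiff_comm _ _)⟩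

/-- The uniform family of subsets of `X` of size `ℓ` has the exchange property. -/
lemma unif_exch (X : Finset α) (ℓ : ℕ) :
    DMExch {S : Finset α | S ⊆ X ∧ S.card = ℓ} := by
  rintro A ⟨hAX, hAc⟩ B ⟨hBX, hBc⟩ x hx
  have hcard : (A \ B).card = (B \ A).card := by
    have h1 := Finset.card_sdiff_add_card_inter A B
    have h2 := Finset.card_sdiff_add_card_inter B A
    rw [Finset.inter_comm B A] at h2
    omega
  rcases Finset.mem_symmDiff.mp hx with ⟨hxA, hxB⟩ | ⟨hxB, hxA⟩
  · have hne : (B \ A).Nonempty := by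
      rw [← Finset.card_pos, ← hcard, Finset.card_pos]
      exact ⟨x, Finset.mem_sdiff.mpr ⟨hxA, hxB⟩⟩
    obtain ⟨y, hy⟩ := hne
    obtain ⟨hyB, hyA⟩ := Finset.mem_sdiff.mp hy
    have hxy : x ≠ y := fun h => hyA (h ▸ hxA)
    have heq : A ∆ {x, y} = insert y (A.erase x) := by
      ext a
      by_cases h1 : a = x <;> by_cases h2 : a = y <;>
        simp_all [Finset.mem_symmDiff]
    refine ⟨y, Finset.mem_symmDiff.mpr (Or.inr ⟨hyB, hyA⟩), ?_⟩
    rw [heq]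
    constructor
    · intro a ha
      rcases Finset.mem_insert.mp ha with rfl | ha
      · exact hBX hyB
      · exact hAX (Finset.mem_of_mem_erase ha)
    · rw [Finset.card_insert_of_notMem (fun h => hyA (Finset.mem_of_mem_erase h)),
        Finset.card_erase_of_mem hxA]
      have : 1 ≤ A.card := Finset.card_pos.mpr ⟨x, hxA⟩
      omega
  · have hne : (A \ B).Nonempty := by
      rw [← Finset.card_pos, hcard, Finset.card_pos]
      exact ⟨x, Finset.mem_sdiff.mpr ⟨hxB, hxA⟩⟩
    obtain ⟨y, hy⟩ := hne
    obtain ⟨hyA, hyB⟩ := Finset.mem_sdiff.mp hy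
    have hxy : x ≠ y := fun h => hxA (h ▸ hyA)
    have heq : A ∆ {x, y} = insert x (A.erase y) := by
      ext a
      by_cases h1 : a = x <;> by_cases h2 : a = y <;>
        simp_all [Finset.mem_symmDiff]
    refine ⟨y, Finset.mem_symmDiff.mpr (Or.inl ⟨hyA, hyB⟩), ?_⟩
    rw [heq]
    constructor
    · intro a ha
      rcases Finset.mem_insert.mp ha with rfl | ha
      · exact hBX hxB
      · exact hAX (Finset.mem_of_mem_erase ha)
    · rw [Finset.card_insert_of_notMem (fun h => hxA (Finset.mem_of_mem_erase h)),
        Finset.card_erase_of_mem hyA]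
      have : 1 ≤ A.card := Finset.card_pos.mpr ⟨y, hyA⟩
      omega

lemma sd_inter (F X : Finset α) : F ∆ (F ∩ X) = F \ X := by
  ext a
  simp only [Finset.mem_symmDiff, Finset.mem_inter, Finset.mem_sdiff]
  tauto

/-- The `ℓ`-projection `D|_ℓ X = (V ∖ X, {F ∖ X : F ∈ 𝓕, |F ∩ X| = ℓ})` of a
delta-matroid is again a delta-matroid, provided its family is nonempty. -/
theorem lProjection_isDeltaMatroid (𝓕 : Set (Finset α)) (h : IsDeltaMatroid 𝓕)
    (X : Finset α) (ℓ : ℕ)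
    (hne : {F' : Finset α | ∃ F ∈ 𝓕, (F ∩ X).card = ℓ ∧ F' = F \ X}.Nonempty) :
    IsDeltaMatroid {F' : Finset α | ∃ F ∈ 𝓕, (F ∩ X).card = ℓ ∧ F' = F \ X} := by
  obtain ⟨-, hFex⟩ := h
  refine ⟨hne, ?_⟩
  rintro A' ⟨FA, hFA, hFAcard, rfl⟩ B' ⟨FB, hFB, hFBcard, rfl⟩ x hx
  have hU : DMExch {S : Finset α | S ⊆ X ∧ S.card = ℓ} := unif_exch X ℓ
  have hSA : FA ∩ X ∈ {S : Finset α | S ⊆ X ∧ S.card = ℓ} :=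
    ⟨Finset.inter_subset_right, hFAcard⟩
  have hSB : FB ∩ X ∈ {S : Finset α | S ⊆ X ∧ S.card = ℓ} :=
    ⟨Finset.inter_subset_right, hFBcard⟩
  have hx' : x ∈ (FA ∆ (FA ∩ X)) ∆ (FB ∆ (FB ∩ X)) := by
    rw [sd_inter, sd_inter]; exact hx
  obtain ⟨y, hy, F, hF, S, hS, heq⟩ :=
    sum_exchange 𝓕 {S : Finset α | S ⊆ X ∧ S.card = ℓ} hFex hU
      FA (FA ∩ X) FB (FB ∩ X) x hFA hSA hFB hSB hx'
  rw [sd_inter, sd_inter] at hy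
  rw [sd_inter] at heq
  -- x and y are outside X
  have hout : ∀ a ∈ (FA \ X) ∆ (FB \ X), a ∉ X := by
    intro a ha haX
    rcases Finset.mem_symmDiff.mp ha with ⟨h1, _⟩ | ⟨h1, _⟩ <;>
      exact (Finset.mem_sdiff.mp h1).2 haX
  have hxX : x ∉ X := hout x hx
  have hyX : y ∉ X := hout y hy
  have hFXS : F ∩ X = S := by
    ext a
    simp only [Finset.mem_inter]
    constructor
    · rintro ⟨haF, haX⟩
      by_contra haS
      have : a ∈ F ∆ S := Finset.mem_symmDiff.mpr (Or.inl ⟨haF, haS⟩)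
      rw [← heq] at this
      rcases Finset.mem_symmDiff.mp this with ⟨h1, _⟩ | ⟨h1, _⟩
      · exact (Finset.mem_sdiff.mp h1).2 haX
      · rcases Finset.mem_insert.mp h1 with rfl | h1
        · exact hxX haX
        · exact hyX ((Finset.mem_singleton.mp h1) ▸ haX)
    · intro haS
      have haX : a ∈ X := hS.1 haS
      refine ⟨?_, haX⟩
      by_contra haF
      have : a ∈ F ∆ S := Finset.mem_symmDiff.mpr (Or.inr ⟨haS, haF⟩)
      rw [← heq] at this
      rcases Finset.mem_symmDiff.mp this with ⟨h1, _⟩ | ⟨h1, _⟩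
      · exact (Finset.mem_sdiff.mp h1).2 haX
      · rcases Finset.mem_insert.mp h1 with rfl | h1
        · exact hxX haX
        · exact hyX ((Finset.mem_singleton.mp h1) ▸ haX)
  refine ⟨y, hy, F, hF, by rw [hFXS]; exact hS.2, ?_⟩
  rw [heq, ← hFXS, sd_inter]
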